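/- Let Y follow a MAL_p(μ, Dξ̃, DΣ̃D) distribution (defined via the mixture Y = μ + Dξ̃W + √W DΣ̃^{1/2}Z with W ~ Exp(1) independent of Z ~ N_p(0,I_p)), and let b ∈ ℝ^p with b ≠ 0. Then the linear combination Y^b = b'Y follows a univariate asymmetric Laplace distribution AL(μ*, τ*, δ*) with μ* = b'μ, τ* = (1/2)(1 − b'Dξ̃ / √(2 b'DΣ̃Db + (b'Dξ̃)²)), and δ* = b'DΣ̃Db / (2√(2 b'DΣ̃Db + (b'Dξ̃)²)). -/

import Mathlib

open MeasureTheory ProbabilityTheory Matrix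

open scoped ComplexOrder in
/-- The square root of a positive semidefinite matrix, as defined in the older Mathlib
(removed since; reinstated here with its old definition). -/
noncomputable def Matrix.PosSemidef.sqrt {n 𝕜 : Type*} [Fintype n] [DecidableEq n] [RCLike 𝕜]
    {A : Matrix n n 𝕜} (hA : A.PosSemidef) : Matrix n n 𝕜 :=
  hA.1.eigenvectorUnitary.1 * diagonal ((↑) ∘ (Real.sqrt ∘ hA.1.eigenvalues)) *
    (star hA.1.eigenvectorUnitary : Matrix n n 𝕜)

/-!
Write `b'Y = b'μ + a W + √W V` with `a = b'Dξ̃`, `V = u'Z` and `u = (DΣ̃^{1/2})'b`. Then `V` is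
`N(0, s)` with `s = u'u = b'DΣ̃Db > 0` and is independent of `W`, so integrating out `V` first
gives `E exp(iz b'Y) = e^{iz b'μ} E exp((iza - sz²/2) W) = e^{iz b'μ} (1 + sz²/2 - iza)⁻¹`
by the Laplace transform of `Exp(1)`. The stated `τ*, δ*` are exactly the parameters with
`δ*²/(τ*(1-τ*)) = s/2` and `δ*(1-2τ*)/(τ*(1-τ*)) = a`.
-/

open Set Complex
open scoped NNReal ComplexOrder

namespace Matrix.PosSemidef

variable {n 𝕜 : Type*} [Fintype n] [DecidableEq n] [RCLike 𝕜] {A : Matrix n n 𝕜}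

lemma sqrt_mul_self (hA : A.PosSemidef) : hA.sqrt * hA.sqrt = A := by
  have hU : (star hA.1.eigenvectorUnitary : Matrix n n 𝕜) * hA.1.eigenvectorUnitary.1 = 1 :=
    Unitary.coe_star_mul_self _
  conv_rhs => rw [hA.1.spectral_theorem]
  rw [Unitary.conjStarAlgAut_apply, PosSemidef.sqrt]
  simp only [Matrix.mul_assoc]
  rw [← Matrix.mul_assoc (star (hA.1.eigenvectorUnitary : Matrix n n 𝕜)), hU,
    Matrix.one_mul, ← Matrix.mul_assoc (diagonal _), diagonal_mul_diagonal]
  congr 3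
  funext i
  simp [← RCLike.ofReal_mul, Real.mul_self_sqrt (hA.eigenvalues_nonneg i)]

lemma conjTranspose_sqrt (hA : A.PosSemidef) : hA.sqrtᴴ = hA.sqrt := by
  simp [PosSemidef.sqrt, Matrix.star_eq_conjTranspose, Matrix.mul_assoc, Pi.star_def,
    Function.comp_def]

end Matrix.PosSemidef

lemma Matrix.vecMul_dotProduct_vecMul {m n R : Type*} [Fintype m] [Fintype n] [CommSemiring R]
    (b : m → R) (A : Matrix m n R) :
    vecMul b A ⬝ᵥ vecMul b A = b ⬝ᵥ (A * Aᵀ) *ᵥ b := by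
  rw [← mulVec_mulVec, dotProduct_mulVec, mulVec_transpose]

lemma Matrix.PosDef.diagonal_mul_mul_diagonal {n : Type*} [Fintype n] [DecidableEq n]
    {S : Matrix n n ℝ} (hS : S.PosDef) {d : n → ℝ} (hd : ∀ i, d i ≠ 0) :
    (diagonal d * S * diagonal d).PosDef := by
  have hinj : Function.Injective (diagonal d).mulVec := fun x y hxy => funext fun i =>
    mul_left_cancel₀ (hd i) (by simpa [mulVec_diagonal] using congrFun hxy i)
  simpa using hS.conjTranspose_mul_mul_same hinj

lemma asymLaplace_coeffs_of_mixture {s a τ δ : ℝ} (hs : 0 < s)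
    (hτ : τ = 1 / 2 * (1 - a / √(2 * s + a ^ 2))) (hδ : δ = s / (2 * √(2 * s + a ^ 2))) :
    δ ^ 2 / (τ * (1 - τ)) = s / 2 ∧ δ * (1 - 2 * τ) / (τ * (1 - τ)) = a := by
  set r := √(2 * s + a ^ 2)
  have hr2 : r ^ 2 = 2 * s + a ^ 2 := Real.sq_sqrt (by positivity)
  have hr : 0 < r := Real.sqrt_pos.mpr (by positivity)
  have hττ : τ * (1 - τ) = s / (2 * r ^ 2) := by
    rw [hτ]
    field_simp
    linear_combination hr2
  subst hδ hτ
  rw [hττ]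
  exact ⟨by field_simp, by field_simp; ring⟩

lemma integral_cexp_mul_expMeasure {r : ℝ} (hr : 0 < r) {β : ℂ} (hβ : β.re < r) :
    ∫ w, cexp (β * w) ∂(expMeasure r) = r / (r - β) := by
  have hpdf : ∀ x : ℝ, (ENNReal.ofReal (exponentialPDFReal r x)).toReal • cexp (β * x)
      = (Ici 0).indicator (fun x : ℝ => r * cexp ((β - r) * x)) x := by
    intro x
    rw [ENNReal.toReal_ofReal (exponentialPDFReal_nonneg hr x)]
    rcases le_or_gt 0 x with hx | hx
    · simp only [exponentialPDFReal, gammaPDFReal, if_pos hx, indicator_of_mem (mem_Ici.mpr hx),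
        Real.rpow_one, Real.Gamma_one, div_one, sub_self, Real.rpow_zero, mul_one,
        Complex.real_smul, Complex.ofReal_mul, Complex.ofReal_exp, mul_assoc, ← Complex.exp_add]
      congr 2
      push_cast
      ring
    · simp [exponentialPDFReal, gammaPDFReal, hx.not_ge]
  rw [show expMeasure r = volume.withDensity (fun x => ENNReal.ofReal (exponentialPDFReal r x))
      from rfl, integral_withDensity_eq_integral_toReal_smul
      (measurable_exponentialPDFReal r).ennreal_ofReal (ae_of_all _ fun _ => ENNReal.ofReal_lt_top)]
  simp_rw [hpdf]
  rw [integral_indicator measurableSet_Ici, integral_Ici_eq_integral_Ioi, integral_const_mul,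
    integral_exp_mul_complex_Ioi (by simpa using hβ) 0, Complex.ofReal_zero, mul_zero,
    Complex.exp_zero, ← neg_sub (r : ℂ) β, div_neg]
  ring

lemma ae_nonneg_expMeasure (r : ℝ) : ∀ᵐ w ∂(expMeasure r), 0 ≤ w := by
  have hneg : {w : ℝ | ¬ 0 ≤ w} = Iio 0 := by ext; simp
  rw [ae_iff, hneg, show expMeasure r = volume.withDensity (exponentialPDF r) from rfl,
    withDensity_apply _ measurableSet_Iio]
  exact lintegral_exponentialPDF_of_nonpos le_rfl

section

variable {Ω : Type*} [MeasurableSpace Ω] {P : Measure Ω} [IsProbabilityMeasure P]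

lemma map_dotProduct_eq_gaussianReal {ι : Type*} [Fintype ι] {Z : Ω → ι → ℝ}
    (hZm : Measurable Z) (hZindep : iIndepFun (fun i ω => Z ω i) P)
    (hZgauss : ∀ i, P.map (fun ω => Z ω i) = gaussianReal 0 1) (u : ι → ℝ) :
    P.map (fun ω => u ⬝ᵥ Z ω) = gaussianReal 0 (u ⬝ᵥ u).toNNReal := by
  have hZi : ∀ i, AEMeasurable (fun ω => Z ω i) P :=
    fun i => ((measurable_pi_apply i).comp hZm).aemeasurable
  have hsum := (hZindep.comp (fun i x => u i * x) fun i => measurable_const_mul (u i))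
    |>.charFun_map_fun_sum_eq_prod fun i => (hZi i).const_mul (u i)
  refine Measure.ext_of_charFun ?_
  ext t
  simp only [dotProduct] at hsum ⊢
  rw [hsum, Finset.prod_apply]
  simp_rw [charFun_map_mul_comp (hZi _), hZgauss, charFun_gaussianReal, ← Complex.exp_sum]
  rw [Real.coe_toNNReal _ (Finset.sum_nonneg fun i _ => mul_self_nonneg (u i))]
  congr 1
  push_cast
  simp only [mul_zero, zero_mul, zero_sub, one_mul, Finset.sum_mul, Finset.sum_div,
    Finset.sum_neg_distrib]
  exact congrArg Neg.neg <| Finset.sum_congr rfl fun i _ => by ring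

lemma integral_cexp_normalMeanVarianceMixture {W V : Ω → ℝ} (hWm : Measurable W)
    (hVm : Measurable V) (hW : ∀ᵐ w ∂(P.map W), 0 ≤ w) {v : ℝ≥0}
    (hV : P.map V = gaussianReal 0 v) (hWV : IndepFun W V P) (m a z : ℝ) :
    ∫ ω, cexp (I * z * ↑(m + a * W ω + √(W ω) * V ω)) ∂P
      = cexp (I * z * m) *
          ∫ w, cexp ((I * z * a - ((v * z ^ 2 / 2 : ℝ) : ℂ)) * w) ∂(P.map W) := by
  set f : ℝ × ℝ → ℂ := fun q => cexp (I * z * ↑(m + a * q.1 + √q.1 * q.2)) with hf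
  have hfc : Continuous f := by fun_prop
  have hinner : ∀ w, 0 ≤ w → ∫ x, f (w, x) ∂(gaussianReal 0 v)
      = cexp (I * z * m) * cexp ((I * z * a - ((v * z ^ 2 / 2 : ℝ) : ℂ)) * w) := by
    intro w hw
    have hsplit : ∀ x : ℝ,
        f (w, x) = cexp (I * z * ↑(m + a * w)) * cexp (↑(z * √w) * x * I) := by
      intro x
      simp only [hf, ← Complex.exp_add]
      congr 1
      push_cast
      ring
    simp_rw [hsplit]
    rw [integral_const_mul, ← charFun_apply_real, charFun_gaussianReal, ← Complex.exp_add,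
      ← Complex.exp_add]
    congr 1
    push_cast
    rw [mul_pow, ← Complex.ofReal_pow (√w), Real.sq_sqrt hw]
    ring
  calc ∫ ω, cexp (I * z * ↑(m + a * W ω + √(W ω) * V ω)) ∂P
      = ∫ q, f q ∂((P.map W).prod (P.map V)) := by
        rw [← (indepFun_iff_map_prod_eq_prod_map_map hWm.aemeasurable hVm.aemeasurable).mp hWV,
          integral_map (hWm.prodMk hVm).aemeasurable hfc.aestronglyMeasurable]
    _ = ∫ w, ∫ x, f (w, x) ∂(gaussianReal 0 v) ∂(P.map W) := by
        rw [integral_prod f (Integrable.of_bound hfc.aestronglyMeasurable 1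
          (ae_of_all _ fun q => by simp only [f, mul_assoc, ← ofReal_mul, norm_exp_I_mul_ofReal,
            le_refl])), hV]
    _ = ∫ w, cexp (I * z * m) * cexp ((I * z * a - ((v * z ^ 2 / 2 : ℝ) : ℂ)) * w)
          ∂(P.map W) := integral_congr_ae (hW.mono hinner)
    _ = _ := integral_const_mul _ _

end

/-- a linear combination `b'Y` of a `MAL_p(μ, Dξ̃, DΣ̃D)` random vector
(defined via the mixture representation) follows the univariate asymmetric Laplace
distribution `AL(μ*, τ*, δ*)`, characterized by its characteristic function
`φ(z) = e^{izμ*}(1 + δ*²z²/(τ*(1−τ*)) − iz δ*(1−2τ*)/(τ*(1−τ*)))⁻¹`. -/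
theorem mal_linear_combination_AL {Ω : Type*} [MeasurableSpace Ω] (P : Measure Ω)
    [IsProbabilityMeasure P]
    {p : ℕ} (μ ξ d : Fin p → ℝ) (hd : ∀ i, 0 < d i)
    (S : Matrix (Fin p) (Fin p) ℝ) (hS : S.PosDef)
    (D : Matrix (Fin p) (Fin p) ℝ) (hD : D = Matrix.diagonal d)
    (W : Ω → ℝ) (Z : Ω → Fin p → ℝ) (hWm : Measurable W) (hZm : Measurable Z)
    (hW : Measure.map W P = expMeasure 1)
    (hZindep : iIndepFun (fun i ω => Z ω i) P)
    (hZgauss : ∀ i, Measure.map (fun ω => Z ω i) P = gaussianReal 0 1)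
    (hWZ : IndepFun W Z P)
    (Y : Ω → Fin p → ℝ)
    (hY : ∀ ω, Y ω =
      μ + W ω • D.mulVec ξ + Real.sqrt (W ω) • (D * hS.posSemidef.sqrt).mulVec (Z ω))
    (b : Fin p → ℝ) (hb : b ≠ 0)
    (μs τs δs : ℝ)
    (hμs : μs = b ⬝ᵥ μ)
    (hτs : τs = (1 / 2) * (1 - (b ⬝ᵥ D.mulVec ξ) /
      Real.sqrt (2 * (b ⬝ᵥ (D * S * D).mulVec b) + (b ⬝ᵥ D.mulVec ξ) ^ 2)))
    (hδs : δs = (b ⬝ᵥ (D * S * D).mulVec b) /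
      (2 * Real.sqrt (2 * (b ⬝ᵥ (D * S * D).mulVec b) + (b ⬝ᵥ D.mulVec ξ) ^ 2))) :
    ∀ z : ℝ,
      ∫ ω, Complex.exp (Complex.I * (z : ℂ) * ((b ⬝ᵥ Y ω : ℝ) : ℂ)) ∂P
        = Complex.exp (Complex.I * (z : ℂ) * (μs : ℂ)) *
          (1 + ((δs ^ 2 * z ^ 2 / (τs * (1 - τs)) : ℝ) : ℂ)
            - Complex.I * (z : ℂ) * ((δs * (1 - 2 * τs) / (τs * (1 - τs)) : ℝ) : ℂ))⁻¹ := by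
  intro z
  subst hD
  set u := vecMul b (diagonal d * hS.posSemidef.sqrt)
  set a := b ⬝ᵥ diagonal d *ᵥ ξ
  set s := b ⬝ᵥ (diagonal d * S * diagonal d) *ᵥ b
  have hs : 0 < s := by
    simpa using (hS.diagonal_mul_mul_diagonal fun i => (hd i).ne').dotProduct_mulVec_pos hb
  have hu : u ⬝ᵥ u = s := by
    rw [vecMul_dotProduct_vecMul, transpose_mul, diagonal_transpose,
      ← conjTranspose_eq_transpose_of_trivial, hS.posSemidef.conjTranspose_sqrt,
      Matrix.mul_assoc, ← Matrix.mul_assoc hS.posSemidef.sqrt, hS.posSemidef.sqrt_mul_self,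
      ← Matrix.mul_assoc]
  have hbY : ∀ ω, b ⬝ᵥ Y ω = b ⬝ᵥ μ + a * W ω + √(W ω) * (u ⬝ᵥ Z ω) := fun ω => by
    rw [hY, dotProduct_add, dotProduct_add, dotProduct_smul, dotProduct_smul,
      dotProduct_mulVec b (diagonal d * _), smul_eq_mul, smul_eq_mul, mul_comm a]
  have hV := map_dotProduct_eq_gaussianReal hZm hZindep hZgauss u
  rw [hu] at hV
  obtain ⟨hscale, hskew⟩ := asymLaplace_coeffs_of_mixture hs hτs hδs
  simp_rw [hbY]
  have hWV : IndepFun W (fun ω => u ⬝ᵥ Z ω) P :=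
    hWZ.comp (φ := id) (ψ := (u ⬝ᵥ ·)) measurable_id (by fun_prop)
  rw [integral_cexp_normalMeanVarianceMixture hWm (by fun_prop) (hW ▸ ae_nonneg_expMeasure 1)
      hV hWV, hW, integral_cexp_mul_expMeasure one_pos ?_, hμs, mul_div_right_comm (δs ^ 2),
    hscale, hskew, Real.coe_toNNReal _ hs.le]
  · push_cast
    ring
  · simp only [sub_re, mul_re, I_re, I_im, ofReal_re, ofReal_im]
    nlinarith [sq_nonneg z]
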